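/- arXiv:2109.10551 — 5 statements merged into one kernel-verified Lean document; each statement's English description precedes it below -/
import Mathlib

section
/- Let m and n be integers with 1 ≤ m ≤ n, let l ≥ 0 be an integer, and let U = (u_{st}) be an m×n matrix of independent indeterminates over ℂ. Suppose Q(U) is a polynomial in the entries of U such that for every B ∈ GL_m(ℂ) the polynomial obtained from Q by the substitution U ↦ BU (i.e. u_{st} ↦ Σ_{p=1}^m b_{sp} u_{pt}) equals det(B)^l · Q(U). Then Q(U) is a ℂ-linear combination of products ∏_{i=1}^{l} U_{I_i}, where each I_i is a subset of {1,…,n} of cardinality m and U_{I_i} is the corresponding maximal (m×m) minor of U. -/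
/-!
Cayley's Ω-process. Substituting `U ↦ Y U` for a generic `m × m` matrix `Y`, relative
invariance gives `Q(Y U) = det(Y)^l Q(U)` as polynomials, since both sides agree wherever
`det Y ≠ 0`. Apply to both sides the `ℂ[U]`-linear functional `P ↦ (Ω^l P)(Y = 0)`. On the
right this gives `c • Q` with `c = ∑ b, b! * (coeff b (det Y ^ l))^2 > 0`. On the left, a
monomial of `Q` becomes a product of entries of `Y U`, which are linear forms in `Y`, and `Ω^l`
of a product of linear forms is a sum of products of `l` determinants, here products of maximal
minors of `U`.
-/

open MvPolynomial

/-- The maximal (`m × m`) minor of the `m × n` matrix of indeterminates `U = (X (s,t))`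
on the columns indexed by `J : Fin m → Fin n` (listed in increasing order when `J` is
strictly monotone). -/
noncomputable def maxMinor (m n : ℕ) (J : Fin m → Fin n) : MvPolynomial (Fin m × Fin n) ℂ :=
  Matrix.det (Matrix.of fun s t : Fin m => X (s, J t))

open Finset

section Fiberwise

variable {α β γ : Type*} [Fintype α] [Fintype β] [DecidableEq γ]

def fiberwiseEquivEquivPi (κ : α → γ) (f : β → γ) :
    {w : α ≃ β // ∀ s, f (w s) = κ s} ≃ ∀ c, {s // κ s = c} ≃ {j // f j = c} where
  toFun w c := w.1.subtypeEquiv fun s => by rw [w.2 s]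
  invFun e := ⟨Equiv.ofFiberEquiv e, Equiv.ofFiberEquiv_map e⟩
  left_inv w := by ext s; simp [Equiv.ofFiberEquiv]
  right_inv e := by
    ext c ⟨s, rfl⟩
    simp [Equiv.ofFiberEquiv, Equiv.subtypeEquiv, Equiv.sigmaFiberEquiv]

theorem card_subtype_eq_sum_single (κ : α → γ) (c : γ) :
    Fintype.card {s // κ s = c} = (∑ s, Finsupp.single (κ s) 1 : γ →₀ ℕ) c := by
  classical
  simp [Fintype.card_subtype, Finsupp.finsetSum_apply, Finsupp.single_apply]

variable [Fintype γ] [DecidableEq α] [DecidableEq β]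

theorem card_fiberwise_equiv (κ : α → γ) (f : β → γ) :
    Fintype.card {w : α ≃ β // ∀ s, f (w s) = κ s} =
      if ∑ j, Finsupp.single (f j) 1 = ∑ s, Finsupp.single (κ s) 1
      then ∏ c, ((∑ s, Finsupp.single (κ s) 1 : γ →₀ ℕ) c).factorial else 0 := by
  rw [Fintype.card_congr (fiberwiseEquivEquivPi κ f), Fintype.card_pi]
  simp only [Finsupp.ext_iff, ← card_subtype_eq_sum_single]
  split_ifs with h
  · exact prod_congr rfl fun c _ => Fintype.card_equiv (Fintype.equivOfCardEq (h c).symm)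
  · push Not at h
    obtain ⟨c, hc⟩ := h
    refine prod_eq_zero (mem_univ c) (Fintype.card_eq_zero_iff.2 ⟨fun e => hc ?_⟩)
    exact (Fintype.card_congr e).symm

theorem factorial_smul_coeff_prod_linear {R : Type*} [CommSemiring R] (A : β → γ → R)
    (κ : α → γ) :
    (∏ c, ((∑ s, Finsupp.single (κ s) 1 : γ →₀ ℕ) c).factorial) •
        coeff (∑ s, Finsupp.single (κ s) 1) (∏ j, ∑ c, C (A j c) * X c) =
      ∑ w : α ≃ β, ∏ s, A (w s) (κ s) := by
  have hprod : ∏ j, ∑ c, C (A j c) * X c =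
      ∑ f : β → γ,
        C (∏ j, A j (f j)) * monomial (∑ j, Finsupp.single (f j) 1) (1 : R) := by
    rw [prod_univ_sum, Fintype.piFinset_univ]
    refine sum_congr rfl fun f _ => ?_
    rw [prod_mul_distrib, ← map_prod, monomial_sum_one]
    rfl
  have hfiber : ∑ w : α ≃ β, ∏ s, A (w s) (κ s) =
      ∑ f : β → γ,
        Fintype.card {w : α ≃ β // ∀ s, f (w s) = κ s} • ∏ j, A j (f j) := by
    rw [← sum_fiberwise univ fun w : α ≃ β => κ ∘ w.symm]
    refine sum_congr rfl fun f _ => ?_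
    rw [Fintype.card_subtype, ← sum_const]
    refine sum_congr (filter_congr fun w _ => ?_) fun w hw => ?_
    · simp only [funext_iff, Function.comp_apply]
      exact ⟨fun h s => by simpa using (h (w s)).symm,
        fun h j => by simpa using (h (w.symm j)).symm⟩
    · simp only [← (mem_filter.1 hw).2]
      exact w.prod_comp fun j => A j (f j)
  rw [hprod, hfiber, coeff_sum, smul_sum]
  refine sum_congr rfl fun f _ => ?_
  rw [coeff_C_mul, coeff_monomial, card_fiberwise_equiv]
  split_ifs <;> simp [nsmul_eq_mul]

end Fiberwise

theorem MvPolynomial.monomial_one_eq_prod_X {R σ : Type*} [CommSemiring R] (μ : σ →₀ ℕ) :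
    monomial μ (1 : R) = ∏ j : (Σ x : μ.support, Fin (μ x)), X (j.1 : σ) := by
  rw [← prod_X_pow_eq_monomial, ← prod_coe_sort, Fintype.prod_sigma]
  simp

theorem MvPolynomial.eq_of_eval_eq_of_eval_ne_zero {K σ : Type*} [CommRing K] [IsDomain K]
    [Infinite K] {f p q : MvPolynomial σ K} (hf : f ≠ 0)
    (h : ∀ x, eval x f ≠ 0 → eval x p = eval x q) : p = q :=
  mul_left_cancel₀ hf <| funext fun x => by
    by_cases hx : eval x f = 0 <;> simp [hx, h]

/-- The sum regroups as `∑ k, W k * (∑ j with g j = k, e j) ^ 2`. -/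
theorem sum_mul_sum_ite_eq_pos {ι κ : Type*} [Fintype ι] [DecidableEq κ] (g : ι → κ)
    (e : ι → ℤ) (W : κ → ℤ) (hW : ∀ k, 0 < W k) (i₀ : ι)
    (hi₀ : ∀ i, g i = g i₀ → i = i₀) (he : e i₀ ≠ 0) :
    0 < ∑ i, e i * W (g i) * ∑ j, if g j = g i then e j else 0 := by
  have hfiber : ∑ i, e i * W (g i) * ∑ j, (if g j = g i then e j else 0) =
      ∑ k ∈ univ.image g, W k * (∑ j ∈ univ.filter (g · = k), e j) ^ 2 := by
    rw [← sum_fiberwise_of_maps_to fun i _ => mem_image_of_mem g (mem_univ i)]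
    refine sum_congr rfl fun k _ => ?_
    rw [sum_congr rfl fun i hi => by rw [(mem_filter.1 hi).2, ← sum_filter], ← sum_mul,
      ← sum_mul]
    ring
  have hsingle : ∑ j ∈ univ.filter (g · = g i₀), e j = e i₀ :=
    sum_eq_single_of_mem i₀ (by simp) fun j hj hne => absurd (hi₀ j (mem_filter.1 hj).2) hne
  rw [hfiber]
  refine sum_pos' (fun k _ => mul_nonneg (hW k).le (sq_nonneg _))
    ⟨g i₀, mem_image_of_mem g (mem_univ i₀), ?_⟩
  rw [hsingle]
  exact mul_pos (hW _) (sq_pos_of_ne_zero he)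

section OmegaProcess

open Equiv Matrix

variable (R : Type*) [CommRing R] (m l : ℕ)

noncomputable def omegaExponent (σ : Fin l → Perm (Fin m)) : (Fin m × Fin m) →₀ ℕ :=
  ∑ s : Fin l × Fin m, Finsupp.single (s.2, σ s.1 s.2) 1

/-- `P ↦ (Ω^l P)(0)` for Cayley's Ω-process `Ω = det (∂/∂y_{pq})`. Expanding the
determinant gives `Ω^l = ∑ σ, sign σ • ∂^(omegaExponent σ)`, and
`(∂^b P)(0) = b! • coeff b P`. -/
noncomputable def omegaAtZero : MvPolynomial (Fin m × Fin m) R →ₗ[R] R :=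
  ∑ σ : Fin l → Perm (Fin m),
    ((∏ i, ((Perm.sign (σ i) : ℤ) : R)) *
      ((∏ c, (omegaExponent m l σ c).factorial : ℕ) : R)) • lcoeff R (omegaExponent m l σ)

variable {R m l}

theorem omegaAtZero_apply (P : MvPolynomial (Fin m × Fin m) R) :
    omegaAtZero R m l P = ∑ σ : Fin l → Perm (Fin m),
      (∏ i, ((Perm.sign (σ i) : ℤ) : R)) *
        (((∏ c, (omegaExponent m l σ c).factorial : ℕ) : R) *
          coeff (omegaExponent m l σ) P) := by
  simp [omegaAtZero, mul_assoc]

theorem omegaAtZero_map {S : Type*} [CommRing S] (f : R →+* S)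
    (P : MvPolynomial (Fin m × Fin m) R) :
    omegaAtZero S m l (map f P) = f (omegaAtZero R m l P) := by
  simp [omegaAtZero_apply, coeff_map]

theorem omegaAtZero_prod_linear {J : Type*} [Fintype J] [DecidableEq J]
    (A : J → Matrix (Fin m) (Fin m) R) :
    omegaAtZero R m l (∏ j, ∑ c : Fin m × Fin m, C (A j c.1 c.2) * X c) =
      ∑ w : Fin l × Fin m ≃ J, ∏ i, (of fun p q => A (w (i, p)) p q).det := by
  have hdet : ∀ (w : Fin l × Fin m ≃ J) i, (of fun p q => A (w (i, p)) p q).det =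
      ∑ π : Perm (Fin m), ((Perm.sign π : ℤ) : R) * ∏ p, A (w (i, p)) p (π p) := by
    intro w i
    rw [← det_transpose, det_apply']
    rfl
  simp_rw [omegaAtZero_apply, ← nsmul_eq_mul, omegaExponent,
    factorial_smul_coeff_prod_linear (fun j (c : Fin m × Fin m) => A j c.1 c.2), mul_sum,
    hdet, prod_univ_sum, Fintype.piFinset_univ]
  rw [sum_comm]
  refine sum_congr rfl fun w _ => sum_congr rfl fun σ _ => ?_
  rw [prod_mul_distrib, Fintype.prod_prod_type]

theorem det_mvPolynomialX_pow :
    (mvPolynomialX (Fin m) (Fin m) R).det ^ l =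
      ∑ σ : Fin l → Perm (Fin m),
        monomial (omegaExponent m l σ) (∏ i, ((Perm.sign (σ i) : ℤ) : R)) := by
  rw [← Fin.prod_const, ← det_transpose, det_apply', prod_univ_sum, Fintype.piFinset_univ]
  refine sum_congr rfl fun σ _ => ?_
  rw [omegaExponent, monomial_sum_index, prod_mul_distrib, map_prod, Fintype.prod_prod_type]
  simp [mvPolynomialX_apply, X]

theorem map_det_mvPolynomialX {S : Type*} [CommRing S] (f : R →+* S) :
    map f (mvPolynomialX (Fin m) (Fin m) R).det = (mvPolynomialX (Fin m) (Fin m) S).det := by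
  rw [RingHom.map_det]
  congr 1
  ext p q
  simp [mvPolynomialX_apply]

theorem omegaAtZero_det_pow_mul_C (Q : R) :
    omegaAtZero R m l ((mvPolynomialX (Fin m) (Fin m) R).det ^ l * C Q) =
      (omegaAtZero ℤ m l ((mvPolynomialX (Fin m) (Fin m) ℤ).det ^ l) : R) * Q := by
  rw [mul_comm, ← smul_eq_C_mul, map_smul, ← map_det_mvPolynomialX (Int.castRingHom R),
    ← map_pow, omegaAtZero_map, eq_intCast, smul_eq_mul, mul_comm]

theorem omegaExponent_eq_one_iff {σ : Fin l → Perm (Fin m)} :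
    omegaExponent m l σ = omegaExponent m l 1 ↔ σ = 1 := by
  refine ⟨fun h => ?_, fun h => h ▸ rfl⟩
  funext i
  refine Equiv.ext fun p => ?_
  by_contra hne
  have hcard := congrArg (· (p, σ i p)) h
  simp only [omegaExponent, ← card_subtype_eq_sum_single] at hcard
  have hpos : 0 < Fintype.card {s : Fin l × Fin m // (s.2, σ s.1 s.2) = (p, σ i p)} :=
    Fintype.card_pos_iff.2 ⟨⟨(i, p), rfl⟩⟩
  refine hpos.ne' (hcard.trans (Fintype.card_eq_zero_iff.2 ⟨fun ⟨s, hs⟩ => hne ?_⟩))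
  simp only [Pi.one_apply, Perm.coe_one, id_eq, Prod.mk.injEq] at hs
  rw [Pi.one_apply, Perm.one_apply, ← hs.2, hs.1]

theorem omegaAtZero_det_pow_pos :
    0 < omegaAtZero ℤ m l ((mvPolynomialX (Fin m) (Fin m) ℤ).det ^ l) := by
  simp_rw [omegaAtZero_apply, det_mvPolynomialX_pow, coeff_sum, coeff_monomial, ← mul_assoc]
  exact sum_mul_sum_ite_eq_pos (omegaExponent m l) _
    (fun b => ((∏ c, (b c).factorial : ℕ) : ℤ)) (fun b => by positivity) 1
    (fun σ => omegaExponent_eq_one_iff.1) (by simp)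

end OmegaProcess

section MaxMinors

open Equiv Matrix

variable (m n l : ℕ)

noncomputable def maxMinorProdSpan : Submodule ℂ (MvPolynomial (Fin m × Fin n) ℂ) :=
  Submodule.span ℂ
    { P : MvPolynomial (Fin m × Fin n) ℂ |
      ∃ J : Fin l → Fin m → Fin n, (∀ i, StrictMono (J i)) ∧
        P = ∏ i, maxMinor m n (J i) }

variable {m n l}

theorem maxMinor_comp_perm (J : Fin m → Fin n) (σ : Perm (Fin m)) :
    maxMinor m n (J ∘ σ) = (Perm.sign σ : ℤ) * maxMinor m n J := by
  rw [maxMinor, maxMinor, ← det_permute']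
  rfl

theorem maxMinor_eq_zero_of_not_injective {J : Fin m → Fin n} (hJ : ¬ Function.Injective J) :
    maxMinor m n J = 0 := by
  obtain ⟨a, b, hab, hne⟩ := Function.not_injective_iff.1 hJ
  exact det_zero_of_column_eq hne fun k => by simp [hab]

theorem prod_maxMinor_mem_maxMinorProdSpan (J : Fin l → Fin m → Fin n) :
    ∏ i, maxMinor m n (J i) ∈ maxMinorProdSpan m n l := by
  by_cases hJ : ∀ i, Function.Injective (J i)
  · have hsort : ∀ i, maxMinor m n (J i) =
        (Perm.sign (Tuple.sort (J i))⁻¹ : ℤ) * maxMinor m n (J i ∘ Tuple.sort (J i)) := by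
      intro i
      rw [← maxMinor_comp_perm]
      congr 1
      funext p
      simp
    rw [prod_congr rfl fun i _ => hsort i, prod_mul_distrib, ← Int.cast_prod, ← zsmul_eq_mul]
    refine zsmul_mem (Submodule.subset_span ?_) _
    refine ⟨_, fun i => ?_, rfl⟩
    exact (Tuple.monotone_sort (J i)).strictMono_of_injective
      ((hJ i).comp (Tuple.sort (J i)).injective)
  · push Not at hJ
    obtain ⟨i, hi⟩ := hJ
    rw [prod_eq_zero (mem_univ i) (maxMinor_eq_zero_of_not_injective hi)]
    exact zero_mem _

end MaxMinors

section GenericProduct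

open Matrix

variable {m n l : ℕ}

variable (m n) in
/-- The entries of `Y U` for a generic `m × m` matrix `Y`, as polynomials in the entries of `Y`
over `ℂ[U]`. -/
noncomputable def genericMulEntry (st : Fin m × Fin n) :
    MvPolynomial (Fin m × Fin m) (MvPolynomial (Fin m × Fin n) ℂ) :=
  ∑ p, X (st.1, p) * C (X (p, st.2))

theorem genericMulEntry_eq (st : Fin m × Fin n) :
    genericMulEntry m n st =
      ∑ c : Fin m × Fin m,
        C ((of fun a q => if a = st.1 then X (q, st.2) else 0) c.1 c.2) * X c := by
  rw [Fintype.sum_prod_type,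
    sum_eq_single_of_mem st.1 (mem_univ _) fun a _ ha => sum_eq_zero fun q _ => by simp [ha]]
  simp [genericMulEntry, mul_comm]

theorem omegaAtZero_prod_genericMulEntry {J : Type*} [Fintype J] [DecidableEq J]
    (v : J → Fin m × Fin n) :
    omegaAtZero _ m l (∏ j, genericMulEntry m n (v j)) =
      ∑ w : Fin l × Fin m ≃ J, ∏ i,
        if ∀ p, (v (w (i, p))).1 = p then maxMinor m n fun p => (v (w (i, p))).2 else 0 := by
  simp_rw [genericMulEntry_eq]
  rw [omegaAtZero_prod_linear]
  refine sum_congr rfl fun w _ => prod_congr rfl fun i _ => ?_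
  split_ifs with h
  · rw [maxMinor, ← det_transpose]
    congr 1
    ext p q
    simp [h]
  · push Not at h
    obtain ⟨p, hp⟩ := h
    exact det_eq_zero_of_row_eq_zero p fun q => by simp [Ne.symm hp]

theorem omegaAtZero_aeval_genericMulEntry_mem (Q : MvPolynomial (Fin m × Fin n) ℂ) :
    omegaAtZero _ m l (aeval (genericMulEntry m n) Q) ∈ maxMinorProdSpan m n l := by
  let L := (omegaAtZero _ m l).restrictScalars ℂ ∘ₗ (aeval (genericMulEntry m n)).toLinearMap
  change L Q ∈ _
  rw [Q.as_sum, map_sum]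
  refine Submodule.sum_mem _ fun μ _ => ?_
  rw [← mul_one (coeff μ Q), ← smul_eq_mul, ← smul_monomial, map_smul]
  refine Submodule.smul_mem _ _ ?_
  simp only [L, LinearMap.comp_apply, AlgHom.toLinearMap_apply, monomial_one_eq_prod_X, map_prod,
    aeval_X, LinearMap.restrictScalars_apply, omegaAtZero_prod_genericMulEntry]
  refine Submodule.sum_mem _ fun w _ => ?_
  rw [Fintype.prod_ite_zero]
  split_ifs
  · exact prod_maxMinor_mem_maxMinorProdSpan _
  · exact zero_mem _

theorem aeval_genericMulEntry_eq (Q : MvPolynomial (Fin m × Fin n) ℂ)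
    (hQ : ∀ B : Matrix (Fin m) (Fin m) ℂ, IsUnit B.det →
      aeval (fun st : Fin m × Fin n => ∑ p : Fin m, C (B st.1 p) * X (p, st.2)) Q
        = C (B.det ^ l) * Q) :
    aeval (genericMulEntry m n) Q =
      (mvPolynomialX (Fin m) (Fin m) (MvPolynomial (Fin m × Fin n) ℂ)).det ^ l * C Q := by
  -- compare both sides as polynomial functions of `(Y, U)` away from `det Y = 0`
  let e := sumAlgEquiv ℂ (Fin m × Fin m) (Fin m × Fin n)
  apply e.symm.injective
  refine eq_of_eval_eq_of_eval_ne_zero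
    ((map_ne_zero_iff _ e.symm.injective).2 (det_mvPolynomialX_ne_zero _ _)) fun x hx => ?_
  let φ := (aeval x).comp e.symm.toAlgHom
  let B : Matrix (Fin m) (Fin m) ℂ := of fun p q => x (.inl (p, q))
  have hdet : φ (mvPolynomialX (Fin m) (Fin m) _).det = B.det := by
    rw [AlgHom.map_det]
    congr 1
    ext p q
    simp [φ, B, e, mvPolynomialX_apply]
  have hC : φ (C Q) = eval (x ∘ .inr) Q := by
    have hrename : e.symm (C Q) = rename .inr Q :=
      e.symm_apply_eq.2 (AlgHom.congr_fun (sumAlgEquiv_comp_rename_inr ℂ _ _) Q).symm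
    simp [φ, hrename, eval_rename]
  have hentry : ∀ st, φ (genericMulEntry m n st) = ∑ p, B st.1 p * x (.inr (p, st.2)) := by
    intro st
    simp [φ, B, e, genericMulEntry]
  change φ _ ≠ 0 at hx
  change φ _ = φ _
  rw [hdet] at hx
  have hQx := congrArg (eval (x ∘ .inr)) (hQ B (isUnit_iff_ne_zero.2 hx))
  rw [comp_aeval_apply, map_mul, map_pow, hdet, hC]
  simp_rw [hentry]
  rw [← aeval_eq_eval, comp_aeval_apply] at hQx
  simpa using hQx

end GenericProduct

theorem relInvariant_mem_span_prod_maxMinors_general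
    (m n l : ℕ)
    (Q : MvPolynomial (Fin m × Fin n) ℂ)
    (hQ : ∀ B : Matrix (Fin m) (Fin m) ℂ, IsUnit B.det →
      aeval (fun st : Fin m × Fin n => ∑ p : Fin m, C (B st.1 p) * X (p, st.2)) Q
        = C (B.det ^ l) * Q) :
    Q ∈ Submodule.span ℂ
      { P : MvPolynomial (Fin m × Fin n) ℂ |
        ∃ J : Fin l → Fin m → Fin n, (∀ i, StrictMono (J i)) ∧
          P = ∏ i, maxMinor m n (J i) } := by
  have hmem := omegaAtZero_aeval_genericMulEntry_mem (l := l) Q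
  rw [aeval_genericMulEntry_eq Q hQ, omegaAtZero_det_pow_mul_C, ← zsmul_eq_mul,
    ← Int.cast_smul_eq_zsmul ℂ] at hmem
  exact (Submodule.smul_mem_iff _ (Int.cast_ne_zero.2 omegaAtZero_det_pow_pos.ne')).1 hmem

/-- If a polynomial `Q` in the entries of an `m × n` matrix of indeterminates satisfies
`Q(BU) = det(B)^l · Q(U)` for every `B ∈ GL_m(ℂ)`, then `Q` is a `ℂ`-linear combination of
products of `l` maximal minors of `U`. -/
theorem relInvariant_mem_span_prod_maxMinors
    (m n l : ℕ) (hm : 1 ≤ m) (hmn : m ≤ n)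
    (Q : MvPolynomial (Fin m × Fin n) ℂ)
    (hQ : ∀ B : Matrix (Fin m) (Fin m) ℂ, IsUnit B.det →
      aeval (fun st : Fin m × Fin n => ∑ p : Fin m, C (B st.1 p) * X (p, st.2)) Q
        = C (B.det ^ l) * Q) :
    Q ∈ Submodule.span ℂ
      { P : MvPolynomial (Fin m × Fin n) ℂ |
        ∃ J : Fin l → Fin m → Fin n, (∀ i, StrictMono (J i)) ∧
          P = ∏ i, maxMinor m n (J i) } :=
  relInvariant_mem_span_prod_maxMinors_general m n l Q hQ
end

section
/- Let Δ_{ij} (1 ≤ i ≤ j ≤ 4) be 10 independent indeterminates over ℂ, set Δ_{ji} = Δ_{ij}, and let Δ = (Δ_{ij})_{1 ≤ i,j ≤ 4} be the resulting symmetric 4×4 matrix over the polynomial ring ℂ[Δ_{ij} : 1 ≤ i ≤ j ≤ 4]. Define C_1 = Δ_{13}Δ_{24} − Δ_{14}Δ_{23}, C_4 = Δ_{11}Δ_{22} − Δ_{12}², C_5 = Δ_{33}Δ_{44} − Δ_{34}², C_2 = C_4·C_5, and C_3 = det(Δ). Then the three polynomials C_1, C_2, C_3 are algebraically independent over ℂ.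 -/
open MvPolynomial

/-- The index set for the 10 independent entries `Δ_{ij}`, `1 ≤ i ≤ j ≤ 4`,
of a symmetric 4×4 matrix of indeterminates. -/
abbrev SymIdx4 : Type := {p : Fin 4 × Fin 4 // p.1 ≤ p.2}

/-- The symmetric 4×4 matrix of indeterminates `Δ = (Δ_{ij})` over `ℂ[Δ_{ij} : i ≤ j]`. -/
noncomputable def Δmat : Matrix (Fin 4) (Fin 4) (MvPolynomial SymIdx4 ℂ) :=
  Matrix.of fun i j => X ⟨(i ⊓ j, i ⊔ j), inf_le_sup⟩

/-!
Specializing `Δ` to a suitable symmetric matrix over `ℂ[x, y, z]` sends `C₁, C₂, C₃` to the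
variables `x, y, z`; algebraic independence pulls back along algebra homomorphisms.
-/

theorem algebraicIndependent_of_comp_eq_X {R A σ : Type*} [CommRing R] [CommRing A]
    [Algebra R A] {v : σ → A} (f : A →ₐ[R] MvPolynomial σ R) (hf : f ∘ v = X) :
    AlgebraicIndependent R v :=
  .of_comp f (hf ▸ algebraicIndependent_X σ R)

noncomputable def Δmat.evalAt {S : Type*} [CommRing S] [Algebra ℂ S]
    (M : Matrix (Fin 4) (Fin 4) S) : MvPolynomial SymIdx4 ℂ →ₐ[ℂ] S :=
  aeval fun p => M p.1.1 p.1.2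

section evalAt

variable {S : Type*} [CommRing S] [Algebra ℂ S] {M : Matrix (Fin 4) (Fin 4) S}

theorem Δmat.evalAt_apply (hM : M.IsSymm) (i j : Fin 4) :
    Δmat.evalAt M (Δmat i j) = M i j := by
  simp only [Δmat.evalAt, Δmat, Matrix.of_apply, aeval_X]
  rcases le_total i j with h | h
  · simp [h]
  · simp [h, hM.apply]

theorem Δmat.evalAt_det (hM : M.IsSymm) : Δmat.evalAt M Δmat.det = M.det := by
  rw [AlgHom.map_det]
  congr 1
  ext i j
  exact Δmat.evalAt_apply hM i j

end evalAt

/-- A specialization of `Δ` sending `C₁, C₂, C₃` to `X 0, X 1, X 2`. -/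
noncomputable def Δspecial : Matrix (Fin 4) (Fin 4) (MvPolynomial (Fin 3) ℂ) :=
  !![X 1, 0, 0, 1;
     0, -1, -X 0, 0;
     0, -X 0, X 2 - X 0 ^ 2 - X 1, 1;
     1, 0, 1, 0]

theorem Δspecial_isSymm : Δspecial.IsSymm := by
  ext i j
  fin_cases i <;> fin_cases j <;> rfl

theorem Δspecial_det : Δspecial.det = X 2 := by
  simp [Matrix.det_succ_row_zero, Fin.sum_univ_succ, Δspecial, Fin.succAbove]
  ring

/-- With `C₁ = Δ₁₃Δ₂₄ − Δ₁₄Δ₂₃`, `C₂ = (Δ₁₁Δ₂₂ − Δ₁₂²)(Δ₃₃Δ₄₄ − Δ₃₄²)` and `C₃ = det Δ`,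
the polynomials `C₁, C₂, C₃` are algebraically independent over `ℂ`. -/
theorem c1_c2_c3_algebraicIndependent :
    AlgebraicIndependent ℂ
      ![Δmat 0 2 * Δmat 1 3 - Δmat 0 3 * Δmat 1 2,
        (Δmat 0 0 * Δmat 1 1 - Δmat 0 1 ^ 2) * (Δmat 2 2 * Δmat 3 3 - Δmat 2 3 ^ 2),
        Δmat.det] := by
  have hsymm := Δspecial_isSymm
  refine algebraicIndependent_of_comp_eq_X (Δmat.evalAt Δspecial) ?_
  funext i
  fin_cases i <;>
    simp [Δmat.evalAt_apply hsymm, Δmat.evalAt_det hsymm, Δspecial_det] <;>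
    simp [Δspecial]
end

section
/- Let r ≥ 2 and let u_{iν}, v_{iν} (i ∈ {1,2}, 1 ≤ ν ≤ r) be 4r independent indeterminates over ℚ, and set R_r = Σ_{1 ≤ i < j ≤ r} (u_{1i}u_{2j} − u_{1j}u_{2i})(v_{1i}v_{2j} − v_{1j}v_{2i}). Then for every integer l ≥ 1 and all indices 1 ≤ p < q ≤ r one has the identity of polynomials ∂²(R_r^l)/∂u_{1p}∂u_{2q} − ∂²(R_r^l)/∂u_{1q}∂u_{2p} = l(l+1)·(v_{1p}v_{2q} − v_{1q}v_{2p})·R_r^{l−1}. -/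
open MvPolynomial

/-- Variable index type for the entries of two `2 × r` matrices `U` (left summand)
and `V` (right summand) of indeterminates. -/
abbrev UVvar (r : ℕ) : Type := (Fin 2 × Fin r) ⊕ (Fin 2 × Fin r)

/-- The entry `u_{iν}` of `U`. -/
noncomputable def uVar (r : ℕ) (i : Fin 2) (ν : Fin r) : MvPolynomial (UVvar r) ℚ :=
  X (Sum.inl (i, ν))

/-- The entry `v_{iν}` of `V`. -/
noncomputable def vVar (r : ℕ) (i : Fin 2) (ν : Fin r) : MvPolynomial (UVvar r) ℚ :=
  X (Sum.inr (i, ν))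

/-- `R_r = Σ_{i<j} (u_{1i}u_{2j} − u_{1j}u_{2i})(v_{1i}v_{2j} − v_{1j}v_{2i})`,
the pairing of the 2×2 minors of `U` with those of `V`. -/
noncomputable def Rpoly (r : ℕ) : MvPolynomial (UVvar r) ℚ :=
  ∑ i : Fin r, ∑ j ∈ Finset.Ioi i,
    (uVar r 0 i * uVar r 1 j - uVar r 0 j * uVar r 1 i) *
      (vVar r 0 i * vVar r 1 j - vVar r 0 j * vVar r 1 i)

/-! Write `R = Σ_{i,j} u_{1i} u_{2j} [ij]` with `[ij]` the `2 × 2` minors of `V`. The gradient of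
`R` in the `u`'s consists of linear forms whose `(p, q)` minor is `[pq] · R` (termwise this is the
Plücker relation among the minors of `V`), and `∂²R/∂u_{1p}∂u_{2q} = [pq]`. The second-order
chain rule for `R^l` then gives `l(l-1) R^{l-2} · [pq] R + 2l R^{l-1} [pq] = l(l+1) [pq] R^{l-1}`. -/

theorem Derivation.apply_apply_pow_succ {R A : Type*} [CommSemiring R] [CommSemiring A]
    [Algebra R A] (D E : Derivation R A A) (f : A) (n : ℕ) :
    D (E (f ^ (n + 1))) = (n + 1) • (n • f ^ (n - 1) * (D f * E f) + f ^ n * D (E f)) := by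
  rw [E.leibniz_pow, smul_eq_mul, D.map_smul_of_tower, D.leibniz, D.leibniz_pow]
  simp only [Nat.add_sub_cancel, smul_eq_mul, nsmul_eq_mul]
  ring

noncomputable def vMinor (r : ℕ) (i j : Fin r) : MvPolynomial (UVvar r) ℚ :=
  vVar r 0 i * vVar r 1 j - vVar r 0 j * vVar r 1 i

section
variable {r : ℕ}

theorem vMinor_self (i : Fin r) : vMinor r i i = 0 := by
  rw [vMinor]; ring

theorem vMinor_swap (i j : Fin r) : vMinor r j i = -vMinor r i j := by
  rw [vMinor, vMinor]; ring

theorem vMinor_plucker (i j p q : Fin r) :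
    vMinor r p j * vMinor r i q - vMinor r q j * vMinor r i p = vMinor r p q * vMinor r i j := by
  simp only [vMinor]; ring

theorem Rpoly_eq_sum_sum :
    Rpoly r = ∑ i : Fin r, ∑ j : Fin r, uVar r 0 i * uVar r 1 j * vMinor r i j := by
  let t : Fin r → Fin r → MvPolynomial (UVvar r) ℚ := fun j i =>
    uVar r 0 i * uVar r 1 j * vMinor r i j
  calc Rpoly r = ∑ i, ∑ j ∈ Finset.Ioi i, (t j i + t i j) := by
        refine Finset.sum_congr rfl fun i _ => Finset.sum_congr rfl fun j _ => ?_
        simp only [t, vMinor]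
        ring
    _ = ∑ i, ∑ j ∈ {i}ᶜ, t j i := Finset.sum_sum_Ioi_add_eq_sum_sum_off_diag t
    _ = _ := by
        refine Finset.sum_congr rfl fun i _ => Finset.sum_subset (Finset.subset_univ _) ?_
        intro j _ hj
        rw [Finset.mem_compl, not_not, Finset.mem_singleton] at hj
        simp [t, hj, vMinor_self]

theorem pderiv_uVar (a b : Fin 2) (i k : Fin r) :
    pderiv (Sum.inl (a, k)) (uVar r b i) = if (b, i) = (a, k) then 1 else 0 := by
  classical
  rw [uVar, pderiv_X]
  by_cases h : (b, i) = (a, k) <;> simp [h]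

theorem pderiv_vMinor (a : Fin 2) (i j k : Fin r) :
    pderiv (Sum.inl (a, k)) (vMinor r i j) = 0 := by
  simp [vMinor, vVar]

theorem pderiv_u0_Rpoly (p : Fin r) :
    pderiv (Sum.inl (0, p)) (Rpoly r) = ∑ j : Fin r, vMinor r p j * uVar r 1 j := by
  simp [Rpoly_eq_sum_sum, pderiv_uVar, pderiv_vMinor]

theorem pderiv_u1_Rpoly (q : Fin r) :
    pderiv (Sum.inl (1, q)) (Rpoly r) = ∑ i : Fin r, vMinor r i q * uVar r 0 i := by
  simp [Rpoly_eq_sum_sum, pderiv_uVar, pderiv_vMinor]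

theorem pderiv_u0_pderiv_u1_Rpoly (p q : Fin r) :
    pderiv (Sum.inl (0, p)) (pderiv (Sum.inl (1, q)) (Rpoly r)) = vMinor r p q := by
  simp [pderiv_u1_Rpoly, pderiv_uVar, pderiv_vMinor]

theorem pderiv_Rpoly_minor (p q : Fin r) :
    pderiv (Sum.inl (0, p)) (Rpoly r) * pderiv (Sum.inl (1, q)) (Rpoly r)
      - pderiv (Sum.inl (0, q)) (Rpoly r) * pderiv (Sum.inl (1, p)) (Rpoly r)
      = vMinor r p q * Rpoly r := by
  rw [pderiv_u0_Rpoly, pderiv_u1_Rpoly, pderiv_u0_Rpoly, pderiv_u1_Rpoly, Rpoly_eq_sum_sum,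
    Finset.sum_mul_sum, Finset.sum_mul_sum]
  conv_rhs => rw [Finset.sum_comm]
  simp only [← Finset.sum_sub_distrib, Finset.mul_sum]
  refine Finset.sum_congr rfl fun i _ => Finset.sum_congr rfl fun j _ => ?_
  linear_combination uVar r 0 j * uVar r 1 i * vMinor_plucker j i p q

end

theorem pderiv_Rpoly_pow_general (r : ℕ) (l : ℕ)
    (p q : Fin r) :
    pderiv (Sum.inl (0, p)) (pderiv (Sum.inl (1, q)) (Rpoly r ^ l))
        - pderiv (Sum.inl (0, q)) (pderiv (Sum.inl (1, p)) (Rpoly r ^ l))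
      = (l * (l + 1)) •
          ((vVar r 0 p * vVar r 1 q - vVar r 0 q * vVar r 1 p) * Rpoly r ^ (l - 1)) := by
  rcases l with _ | m
  · simp
  have hminor := pderiv_Rpoly_minor p q
  have hpow : m • Rpoly r ^ (m - 1) * Rpoly r = m • Rpoly r ^ m := by
    rcases m with _ | m
    · simp
    · rw [smul_mul_assoc, ← pow_succ, Nat.add_sub_cancel]
  rw [Derivation.apply_apply_pow_succ, Derivation.apply_apply_pow_succ,
    pderiv_u0_pderiv_u1_Rpoly, pderiv_u0_pderiv_u1_Rpoly, vMinor_swap p q, Nat.add_sub_cancel]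
  change _ = _ • (vMinor r p q * _)
  simp only [nsmul_eq_mul] at hpow ⊢
  push_cast
  linear_combination ((m : MvPolynomial (UVvar r) ℚ) + 1) *
    (m * Rpoly r ^ (m - 1) * hminor + vMinor r p q * hpow)

/-- `∂²(R_r^l)/∂u_{1p}∂u_{2q} − ∂²(R_r^l)/∂u_{1q}∂u_{2p}
  = l(l+1)·(v_{1p}v_{2q} − v_{1q}v_{2p})·R_r^{l−1}`. -/
theorem pderiv_Rpoly_pow (r : ℕ) (hr : 2 ≤ r) (l : ℕ) (hl : 1 ≤ l)
    (p q : Fin r) (hpq : p < q) :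
    pderiv (Sum.inl (0, p)) (pderiv (Sum.inl (1, q)) (Rpoly r ^ l))
        - pderiv (Sum.inl (0, q)) (pderiv (Sum.inl (1, p)) (Rpoly r ^ l))
      = (l * (l + 1)) •
          ((vVar r 0 p * vVar r 1 q - vVar r 0 q * vVar r 1 p) * Rpoly r ^ (l - 1)) :=
  pderiv_Rpoly_pow_general r l p q
end

section
/- Let l be a natural number and for natural numbers a, b with a + 2b = l and a real number k set q_{a,b}(k) = ((−1)^b / a!) · (k)_l · (2k+2b−1)_a · (k−1/2)_b · (k−3/2)_{a+b}. Then for every integer b with 0 ≤ b ≤ ⌊l/2⌋ and every real number k, (2k+l−2)(2k+l−3) · Σ_{b_0 = b}^{⌊l/2⌋} q_{l−2b_0, b_0}(k) = 2(k+b−1)(2k+2l−2b−3) · q_{l−2b, b}(k). -/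
/-- The ascending Pochhammer symbol `(x)_n = x(x+1)⋯(x+n−1)` for a real `x`. -/
noncomputable def poch (x : ℝ) (n : ℕ) : ℝ := (ascPochhammer ℝ n).eval x

/-- `q_{a,b}(k) = ((−1)^b / a!)·(k)_l·(2k+2b−1)_a·(k−1/2)_b·(k−3/2)_{a+b}`
(intended for `a + 2b = l`). -/
noncomputable def qab (l a b : ℕ) (k : ℝ) : ℝ :=
  ((-1) ^ b / (a.factorial : ℝ)) * poch k l * poch (2 * k + 2 * b - 1) a *
    poch (k - 1 / 2) b * poch (k - 3 / 2) (a + b)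

/-!
Moving one unit from `a + 2` to the second index, `q_{a+2,b}` and `q_{a,b+1}` differ by the
explicit factor `−2(k+b)(2k+2a+2b−1)/((a+1)(a+2))`, independently of `l`. Hence, by descending
induction on `b`, the tail sum `Σ_{b₀ ≥ b+1} q_{l−2b₀,b₀}` is a multiple of `q_{l−2b,b}`, and adding
`q_{l−2b,b}` itself only changes the coefficient `(2k+l−2)(2k+l−3) − (a+1)(a+2)` with `a = l − 2b`
into the one claimed. The induction starts at `b = ⌊l/2⌋`, where the sum has one term and the
two coefficients agree for `l` even and odd alike.
-/

lemma poch_succ (x : ℝ) (n : ℕ) : poch x (n + 1) = poch x n * (x + n) :=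
  ascPochhammer_succ_eval n x

lemma poch_add_two_left (x : ℝ) (n : ℕ) : poch x (n + 2) = x * (x + 1) * poch (x + 2) n := by
  simp only [poch, ascPochhammer_succ_left, Polynomial.eval_mul, Polynomial.eval_X,
    Polynomial.eval_comp, Polynomial.eval_add, Polynomial.eval_one]
  rw [add_assoc x 1 1, one_add_one_eq_two, mul_assoc]

lemma qab_add_two_left (l a b : ℕ) (k : ℝ) :
    (a + 2) * (a + 1) * qab l (a + 2) b k
      = -(2 * (k + b) * (2 * k + 2 * a + 2 * b - 1)) * qab l a (b + 1) k := by
  have hsum : a + 2 + b = a + (b + 1) + 1 := by omega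
  have harg : 2 * k + 2 * ((b + 1 : ℕ) : ℝ) - 1 = 2 * k + 2 * b - 1 + 2 := by push_cast; ring
  unfold qab
  rw [hsum, harg, poch_succ (k - 3 / 2), poch_succ (k - 1 / 2) b, poch_add_two_left,
    Nat.factorial_succ (a + 1), Nat.factorial_succ a]
  field_simp
  push_cast
  ring

/-- The denominator-cleared recursion
`(2k+l−2)(2k+l−3)·Σ_{b₀=b}^{⌊l/2⌋} q_{l−2b₀,b₀} = 2(k+b−1)(2k+2l−2b−3)·q_{l−2b,b}`. -/
theorem qab_sum_recursion (l b : ℕ) (hb : b ≤ l / 2) (k : ℝ) :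
    (2 * k + l - 2) * (2 * k + l - 3) *
        ∑ b0 ∈ Finset.Icc b (l / 2), qab l (l - 2 * b0) b0 k
      = 2 * (k + b - 1) * (2 * k + 2 * l - 2 * b - 3) * qab l (l - 2 * b) b k := by
  induction hb using Nat.decreasingInduction with
  | self =>
    rw [Finset.Icc_self, Finset.sum_singleton]
    congr 1
    rcases Nat.even_or_odd' l with ⟨n, rfl | rfl⟩ <;>
      push_cast [Nat.mul_div_cancel_left, Nat.mul_add_div] <;> ring
  | of_succ b hlt ih =>
    obtain ⟨a, hl⟩ : ∃ a, l = a + 2 + 2 * b := ⟨l - 2 * b - 2, by omega⟩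
    have hlr : (l : ℝ) = a + 2 + 2 * b := by exact_mod_cast hl
    have ha : l - 2 * (b + 1) = a := by omega
    have ha2 : l - 2 * b = a + 2 := by omega
    rw [← Finset.add_sum_Ioc_eq_sum_Icc hlt.le, ← Finset.Icc_add_one_left_eq_Ioc, mul_add, ih, ha,
      ha2]
    push_cast
    rw [hlr]
    linear_combination qab_add_two_left l a b k
end

section
/- For every real number k and every natural number l, Σ_{b=0}^{⌊l/2⌋} ((−1)^b / (l−2b)!) · (k)_l · (2k+2b−1)_{l−2b} · (k−1/2)_b · (k−3/2)_{l−b} = (1/(2^{2l} · l!)) · (2k−3)_l · (2k−1)_{2l}. -/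
/-!
Every summand carries the factor `(k)_l`, and the duplication formula
`(2k−1)_{2l} = 4^l (k−1/2)_l (k)_l` turns the claim into
`S(l) = (k−1/2)_l (2k−3)_l / l!` for the sum `S(l)` of the remaining factors `t(l, b)`.
This follows by induction from `S(l+1) = ρ(l) S(l)`, `ρ(l) = (k−1/2+l)(2k−3+l)/(l+1)`, which is
proved by creative telescoping: `t(l+1, b) − ρ(l) t(l, b) = w(l, b) − w(l, b+1)` for an explicit
certificate `w` vanishing at `b = 0` and for large `b`.
-/

lemma poch_zero (x : ℝ) : poch x 0 = 1 := by simp [poch]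

lemma poch_succ_left (x : ℝ) (n : ℕ) : poch x (n + 1) = x * poch (x + 1) n := by
  simp [poch, ascPochhammer_succ_left, Polynomial.eval_comp]

lemma poch_two_mul_two_mul (x : ℝ) (n : ℕ) :
    poch (2 * x) (2 * n) = 2 ^ (2 * n) * poch x n * poch (x + 1 / 2) n := by
  induction n with
  | zero => simp [poch_zero]
  | succ n ih =>
    rw [show 2 * (n + 1) = 2 * n + 1 + 1 by ring, poch_succ, poch_succ, ih, poch_succ, poch_succ]
    push_cast
    ring

namespace PochhammerSum

variable (k : ℝ)

noncomputable def term (n b : ℕ) : ℝ :=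
  (-1) ^ b / (n.factorial : ℝ) * poch (2 * k + 2 * b - 1) n * poch (k - 1 / 2) b *
    poch (k - 3 / 2) (n + b)

/-- The certificate `w(l, b)` (found by Zeilberger's algorithm) in the coordinate
`m = l + 1 − 2b`. -/
noncomputable def cert (m b : ℕ) : ℝ :=
  (-1) ^ b * (2 * b) / ((m + 2 * b) * (m.factorial : ℝ)) * poch (2 * k + 2 * b - 2) m *
    poch (k - 1 / 2) b * poch (k - 3 / 2) (m + b)

noncomputable def ratio (l : ℕ) : ℝ :=
  (2 * k + 2 * l - 1) * (2 * k + l - 3) / (2 * (l + 1))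

lemma term_succ_succ_sub (n b : ℕ) :
    term k (n + 2) b - ratio k (n + 1 + 2 * b) * term k (n + 1) b
      = cert k (n + 2) b - cert k n (b + 1) := by
  have h₁ : poch (2 * k + 2 * b - 1) (n + 1) = (2 * k + 2 * b - 1) * poch (2 * k + 2 * b) n := by
    rw [poch_succ_left, sub_add_cancel]
  have h₂ : poch (2 * k + 2 * b - 1) (n + 2) =
      (2 * k + 2 * b - 1) * poch (2 * k + 2 * b) n * (2 * k + 2 * b + n) := by
    rw [poch_succ_left, sub_add_cancel, poch_succ, mul_assoc]
  have h₃ : poch (2 * k + 2 * b - 2) (n + 2) =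
      (2 * k + 2 * b - 2) * (2 * k + 2 * b - 1) * poch (2 * k + 2 * b) n := by
    rw [poch_succ_left, poch_succ_left, show 2 * k + 2 * b - 2 + 1 = 2 * k + 2 * b - 1 by ring,
      sub_add_cancel, mul_assoc]
  have h₄ : 2 * k + 2 * ((b + 1 : ℕ) : ℝ) - 2 = 2 * k + 2 * b := by push_cast; ring
  simp only [term, cert, ratio, h₁, h₂, h₃, h₄]
  rw [show n + 2 + b = n + b + 1 + 1 by ring, show n + 1 + b = n + b + 1 by ring,
    show n + (b + 1) = n + b + 1 by ring]
  simp only [poch_succ, Nat.factorial_succ]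
  push_cast
  field_simp
  ring

lemma term_one_sub (b : ℕ) :
    term k 1 b - ratio k (2 * b) * term k 0 b = cert k 1 b := by
  simp only [term, cert, ratio, zero_add, add_comm 1 b, poch_succ, poch_zero, Nat.factorial]
  push_cast
  field_simp
  ring

/-- At `m = 0` the certificate equals the last summand, so the telescoping identity needs no
parity split. -/
lemma cert_zero_succ (b : ℕ) : cert k 0 (b + 1) = term k 0 (b + 1) := by
  simp only [term, cert, zero_add, poch_zero, Nat.factorial_zero]
  push_cast
  field_simp
  ring

noncomputable def termAt (l b : ℕ) : ℝ := if 2 * b ≤ l then term k (l - 2 * b) b else 0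

noncomputable def certAt (l b : ℕ) : ℝ := if 2 * b ≤ l + 1 then cert k (l + 1 - 2 * b) b else 0

lemma termAt_eq {l n b : ℕ} (h : l = n + 2 * b) : termAt k l b = term k n b := by
  rw [termAt, if_pos (by omega), show l - 2 * b = n by omega]

lemma certAt_eq {l m b : ℕ} (h : l + 1 = m + 2 * b) : certAt k l b = cert k m b := by
  rw [certAt, if_pos (by omega), show l + 1 - 2 * b = m by omega]

lemma termAt_of_lt {l b : ℕ} (h : l < 2 * b) : termAt k l b = 0 := if_neg (by omega)

lemma certAt_of_lt {l b : ℕ} (h : l + 1 < 2 * b) : certAt k l b = 0 := if_neg (by omega)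

lemma certAt_zero (l : ℕ) : certAt k l 0 = 0 := by simp [certAt, cert]

lemma termAt_succ_sub (l b : ℕ) :
    termAt k (l + 1) b - ratio k l * termAt k l b = certAt k l b - certAt k l (b + 1) := by
  rcases Nat.lt_or_ge l (2 * b) with hlt | hge
  · rw [termAt_of_lt k hlt, certAt_of_lt k (by omega : l + 1 < 2 * (b + 1)), mul_zero, sub_zero,
      sub_zero]
    rcases (by omega : l + 1 = 2 * b ∨ l + 1 < 2 * b) with heq | hlt'
    · obtain ⟨c, rfl⟩ : ∃ c, b = c + 1 := Nat.exists_eq_succ_of_ne_zero (by omega)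
      rw [termAt_eq k (n := 0) (by omega), certAt_eq k (m := 0) (by omega), cert_zero_succ]
    · rw [termAt_of_lt k hlt', certAt_of_lt k hlt']
  · obtain ⟨_ | n, rfl⟩ := Nat.exists_eq_add_of_le hge
    · rw [termAt_eq k (n := 1) (by omega), termAt_eq k (n := 0) (by omega),
        certAt_eq k (m := 1) (by omega), certAt_of_lt k (by omega), sub_zero, add_zero,
        term_one_sub]
    · rw [termAt_eq k (n := n + 2) (by omega), termAt_eq k (n := n + 1) (by omega),
        certAt_eq k (m := n + 2) (by omega), certAt_eq k (m := n) (by omega),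
        show 2 * b + (n + 1) = n + 1 + 2 * b by ring, term_succ_succ_sub]

lemma sum_range_termAt_of_lt {l N : ℕ} (h : l / 2 < N) :
    ∑ b ∈ Finset.range N, termAt k l b = ∑ b ∈ Finset.range (l / 2 + 1), termAt k l b := by
  refine (Finset.sum_subset (Finset.range_subset_range.mpr h) fun b _ hb => ?_).symm
  exact termAt_of_lt k (by simp only [Finset.mem_range] at hb; omega)

lemma sum_termAt_succ (l : ℕ) :
    ∑ b ∈ Finset.range ((l + 1) / 2 + 1), termAt k (l + 1) b
      = ratio k l * ∑ b ∈ Finset.range (l / 2 + 1), termAt k l b := by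
  rw [← sum_range_termAt_of_lt k (N := l + 2) (by omega),
    ← sum_range_termAt_of_lt k (N := l + 2) (by omega), Finset.mul_sum, ← sub_eq_zero,
    ← Finset.sum_sub_distrib]
  simp only [termAt_succ_sub]
  rw [Finset.sum_range_sub', certAt_zero, certAt_of_lt k (by omega), sub_zero]

lemma sum_termAt (l : ℕ) :
    ∑ b ∈ Finset.range (l / 2 + 1), termAt k l b
      = poch (k - 1 / 2) l * poch (2 * k - 3) l / l.factorial := by
  induction l with
  | zero => simp [termAt, term, poch_zero]
  | succ l ih =>
    rw [sum_termAt_succ, ih, ratio, poch_succ, poch_succ, Nat.factorial_succ]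
    push_cast
    field_simp
    ring

end PochhammerSum

open PochhammerSum in
/-- `Σ_{b=0}^{⌊l/2⌋} ((−1)^b/(l−2b)!)·(k)_l·(2k+2b−1)_{l−2b}·(k−1/2)_b·(k−3/2)_{l−b}
  = (1/(2^{2l}·l!))·(2k−3)_l·(2k−1)_{2l}`. -/
theorem pochhammer_sum_eval (k : ℝ) (l : ℕ) :
    ∑ b ∈ Finset.range (l / 2 + 1),
        ((-1) ^ b / ((l - 2 * b).factorial : ℝ)) * poch k l *
          poch (2 * k + 2 * b - 1) (l - 2 * b) * poch (k - 1 / 2) b *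
          poch (k - 3 / 2) (l - b)
      = 1 / (2 ^ (2 * l) * (l.factorial : ℝ)) * poch (2 * k - 3) l *
          poch (2 * k - 1) (2 * l) := by
  have factor_poch : ∀ b ∈ Finset.range (l / 2 + 1),
      (-1) ^ b / ((l - 2 * b).factorial : ℝ) * poch k l * poch (2 * k + 2 * b - 1) (l - 2 * b) *
        poch (k - 1 / 2) b * poch (k - 3 / 2) (l - b) = poch k l * termAt k l b := by
    intro b hb
    rw [Finset.mem_range] at hb
    rw [termAt_eq k (n := l - 2 * b) (by omega), term, show l - 2 * b + b = l - b by omega]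
    ring
  rw [Finset.sum_congr rfl factor_poch, ← Finset.mul_sum, sum_termAt,
    show 2 * k - 1 = 2 * (k - 1 / 2) by ring, poch_two_mul_two_mul, sub_add_cancel]
  field_simp
end
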